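/- The initial continuation id-k is well-typed with respect to the id-cont-type constraint: if id-cont-type(γ, μ_id, σ_id, γ') holds, then the initial continuation (defined by case analysis: return the value when the trail and meta continuation are empty; apply the non-empty trail to the value, empty trail, and meta continuation; or pop a continuation-trail pair (κ₀, t₀) from the meta continuation and apply κ₀ to the value, t₀, and the rest) has type γ* → μ_id* → σ_id* → γ'* in λ_C. -/
import Mathlib


namespace Idk16

/- The source calculus λ_D: types, trail types, meta-continuation types,
   terms with the four delimited control operators, the typing constraints
   `compatible` and `id-cont-type`, and the type system of λ_D. -/

mutual
inductive Ty : Type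
  | nat : Ty
  | arrow : Ty → Ty → Tr → Mc → Ty → Tr → Mc → Ty → Ty
inductive Tr : Type
  | empty : Tr
  | tr : Ty → Tr → Mc → Ty → Tr
inductive Mc : Type
  | empty : Mc
  | cons : Ty → Tr → Mc → Ty → Tr → Mc → Mc
end

inductive Compatible : Tr → Tr → Tr → Type
  | leftEmpty (μ : Tr) : Compatible .empty μ μ
  | rightEmpty (μ : Tr) : Compatible μ .empty μ
  | cons {τ1 : Ty} {μ1 : Tr} {σ1 : Mc} {τ1' τ2 : Ty} {μ2 : Tr} {σ2 : Mc} {τ2' : Ty} {μ3 : Tr} :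
      Compatible (.tr τ2 μ2 σ2 τ2') μ3 μ1 →
      Compatible (.tr τ1 μ1 σ1 τ1') (.tr τ2 μ2 σ2 τ2') (.tr τ1 μ3 σ1 τ1')

inductive IdContType : Ty → Tr → Mc → Ty → Type
  | idEmpty (γ : Ty) : IdContType γ .empty .empty γ
  | idTrail (γ : Ty) (σ : Mc) (γ' : Ty) : IdContType γ (.tr γ .empty σ γ') σ γ'
  | idMeta (γ : Ty) (μ0 : Tr) (σ0 : Mc) (γ' : Ty) :
      IdContType γ .empty (.cons γ μ0 σ0 γ' μ0 σ0) γ'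


/- The target calculus λ_C: simply-typed λ-calculus with unit and pairs,
   its typing judgment, the CPS translation of λ_D types, and the
   (type-directed) CPS interpreter translating λ_D into λ_C. -/

inductive CTy : Type
  | nat : CTy
  | unit : CTy
  | arrow : CTy → CTy → CTy
  | prod : CTy → CTy → CTy

mutual
def cpsTy : Ty → CTy
  | .nat => .nat
  | .arrow t1 t2 μα σα a μβ σβ b =>
      .arrow (cpsTy t1)
        (.arrow (.arrow (cpsTy t2) (.arrow (cpsTr μα) (.arrow (cpsMc σα) (cpsTy a))))
          (.arrow (cpsTr μβ) (.arrow (cpsMc σβ) (cpsTy b))))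
def cpsTr : Tr → CTy
  | .empty => .unit
  | .tr t1 μ σ t2 => .arrow (cpsTy t1) (.arrow (cpsTr μ) (.arrow (cpsMc σ) (cpsTy t2)))
def cpsMc : Mc → CTy
  | .empty => .unit
  | .cons t1 μ1 σ1 t2 μ σ =>
      .prod (.prod (.arrow (cpsTy t1) (.arrow (cpsTr μ1) (.arrow (cpsMc σ1) (cpsTy t2))))
          (cpsTr μ))
        (cpsMc σ)
end

inductive CTm : Type
  | var : ℕ → CTm
  | num : ℕ → CTm
  | unit : CTm
  | lam : CTm → CTm
  | app : CTm → CTm → CTm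
  | pair : CTm → CTm → CTm
  | fst : CTm → CTm
  | snd : CTm → CTm

def liftR (f : ℕ → ℕ) : ℕ → ℕ
  | 0 => 0
  | n + 1 => f n + 1

def rename (f : ℕ → ℕ) : CTm → CTm
  | .var n => .var (f n)
  | .num n => .num n
  | .unit => .unit
  | .lam e => .lam (rename (liftR f) e)
  | .app a b => .app (rename f a) (rename f b)
  | .pair a b => .pair (rename f a) (rename f b)
  | .fst a => .fst (rename f a)
  | .snd a => .snd (rename f a)

def liftS (s : ℕ → CTm) : ℕ → CTm
  | 0 => .var 0
  | n + 1 => rename (· + 1) (s n)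

def subst (s : ℕ → CTm) : CTm → CTm
  | .var n => s n
  | .num n => .num n
  | .unit => .unit
  | .lam e => .lam (subst (liftS s) e)
  | .app a b => .app (subst s a) (subst s b)
  | .pair a b => .pair (subst s a) (subst s b)
  | .fst a => .fst (subst s a)
  | .snd a => .snd (subst s a)

/-- Typing judgment of λ_C. -/
inductive CHasTy : List CTy → CTm → CTy → Prop
  | var {Γ : List CTy} {n : ℕ} {A : CTy} : Γ[n]? = some A → CHasTy Γ (.var n) A
  | num {Γ : List CTy} {n : ℕ} : CHasTy Γ (.num n) .nat
  | unit {Γ : List CTy} : CHasTy Γ .unit .unit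
  | lam {Γ : List CTy} {e : CTm} {A B : CTy} : CHasTy (A :: Γ) e B → CHasTy Γ (.lam e) (.arrow A B)
  | app {Γ : List CTy} {f a : CTm} {A B : CTy} :
      CHasTy Γ f (.arrow A B) → CHasTy Γ a A → CHasTy Γ (.app f a) B
  | pair {Γ : List CTy} {a b : CTm} {A B : CTy} :
      CHasTy Γ a A → CHasTy Γ b B → CHasTy Γ (.pair a b) (.prod A B)
  | fst {Γ : List CTy} {a : CTm} {A B : CTy} : CHasTy Γ a (.prod A B) → CHasTy Γ (.fst a) A
  | snd {Γ : List CTy} {a : CTm} {A B : CTy} : CHasTy Γ a (.prod A B) → CHasTy Γ (.snd a) B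

def lam3 (b : CTm) : CTm := .lam (.lam (.lam b))

def app3 (f a b c : CTm) : CTm := .app (.app (.app f a) b) c

/-- The trail cons operation `k :: t` (function composition), defined by
    recursion on the compatibility constraint. -/
def consTm : {μ1 μ2 μ3 : Tr} → Compatible μ1 μ2 μ3 → CTm → CTm → CTm
  | _, _, _, .leftEmpty _, _, t => t
  | _, _, _, .rightEmpty _, k, _ => k
  | _, _, _, .cons c, k, t =>
      lam3 (app3 (rename (· + 3) k) (.var 2) (consTm c (rename (· + 3) t) (.var 1)) (.var 0))

/-- The trail append operation `t1 @ t2` (function composition). -/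
def appendTm : {μ1 μ2 μ3 : Tr} → Compatible μ1 μ2 μ3 → CTm → CTm → CTm
  | _, _, _, .leftEmpty _, _, t2 => t2
  | _, _, _, .rightEmpty _, t1, _ => t1
  | _, _, _, c@(.cons _), t1, t2 => consTm c t1 t2

/-- The initial continuation id-k = λv.λt.λm. case (t, m) of ..., defined by
    case analysis along the id-cont-type constraint. -/
def idkTm : {γ : Ty} → {μ : Tr} → {σ : Mc} → {γ' : Ty} → IdContType γ μ σ γ' → CTm
  | _, _, _, _, .idEmpty _ => lam3 (.var 2)
  | _, _, _, _, .idTrail _ _ _ => lam3 (app3 (.var 1) (.var 2) .unit (.var 0))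
  | _, _, _, _, .idMeta _ _ _ _ =>
      lam3 (app3 (.fst (.fst (.var 0))) (.var 2) (.snd (.fst (.var 0))) (.snd (.var 0)))


/-- The initial continuation id-k is well-typed with respect to the
    id-cont-type constraint: if id-cont-type(γ, μid, σid, γ') holds, then
    id-k has type γ* → μid* → σid* → γ'* in λ_C. -/
theorem idk_well_typed {γ : Ty} {μid : Tr} {σid : Mc} {γ' : Ty}
    (h : IdContType γ μid σid γ') (Δ : List CTy) :
    CHasTy Δ (idkTm h)
      (.arrow (cpsTy γ) (.arrow (cpsTr μid) (.arrow (cpsMc σid) (cpsTy γ')))) := by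
  cases h with
  | idEmpty =>
      exact .lam (.lam (.lam (.var (by simp))))
  | idTrail _ _ =>
      simp only [idkTm, cpsTr, cpsMc]
      exact .lam (.lam (.lam (.app (.app (.app
        (.var (A := .arrow (cpsTy γ) (.arrow .unit (.arrow (cpsMc σid) (cpsTy γ')))) (by simp))
        (.var (A := cpsTy γ) (by simp))) .unit) (.var (A := cpsMc σid) (by simp)))))
  | idMeta μ0 σ0 _ =>
      simp only [idkTm, cpsTr, cpsMc]
      have hv : CHasTy (cpsMc (Mc.cons γ μ0 σ0 γ' μ0 σ0) :: CTy.unit :: cpsTy γ :: Δ)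
          (.var 0) (cpsMc (Mc.cons γ μ0 σ0 γ' μ0 σ0)) := .var (by simp)
      simp only [cpsMc] at hv
      exact .lam (.lam (.lam (.app (.app (.app
        (.fst (.fst hv)) (.var (A := cpsTy γ) (by simp))) (.snd (.fst hv))) (.snd hv))))

end Idk16
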